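/- Let n ≥ 4 be even and let a, b, c, d ∈ ℤ/nℤ with b, c, d pairwise distinct, a, b, d odd, c even, d = 2a + b and 2c = 3a + 3b. Then the map σ defined by: for i even, A_i ↦ B_i, B_i ↦ C_{i+c}, C_i ↦ A_i; for i odd, A_i ↦ C_{i-a+d}, B_i ↦ A_{i+a+b}, C_i ↦ B_{i-b+c-d}, is an automorphism of WH_n(a,b,c,d). -/

import Mathlib

/-! For even `n` the parity of an index in `ZMod n` is well defined, and since `a`, `b`, `d` are odd
and `c` is even, `σ` preserves it. A case check over the three kinds of edges and the two parities,
using `d = 2a + b` and `2c = 3a + 3b`, shows that `σ` sends edges to edges. Moreover `σ³` is the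
translation `i ↦ i + c`, itself an automorphism; hence `σ` is bijective, and it also reflects
adjacency because `σ²` preserves it. -/

/-- The basic (one-directional) adjacency relation of the Woolly Hat graph.
Vertices are pairs `(t, i)` with `t : Fin 3` (`0` = A-vertex, `1` = B-vertex,
`2` = C-vertex) and `i : ZMod n`. -/
def WHRel (n : ℕ) (a b c d : ZMod n) (u v : Fin 3 × ZMod n) : Prop :=
  (u.1 = 0 ∧ v.1 = 0 ∧ (v.2 = u.2 + a ∨ v.2 = u.2 - a)) ∨
  (u.1 = 0 ∧ v.1 = 1 ∧ v.2 = u.2) ∨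
  (u.1 = 0 ∧ v.1 = 2 ∧ v.2 = u.2) ∨
  (u.1 = 1 ∧ v.1 = 2 ∧ (v.2 = u.2 + b ∨ v.2 = u.2 + c ∨ v.2 = u.2 + d))

/-- The Woolly Hat graph `WH_n(a,b,c,d)`. -/
def WH (n : ℕ) (a b c d : ZMod n) : SimpleGraph (Fin 3 × ZMod n) where
  Adj u v := u ≠ v ∧ (WHRel n a b c d u v ∨ WHRel n a b c d v u)
  symm := ⟨fun u v h => ⟨h.1.symm, h.2.symm⟩⟩
  loopless := ⟨fun v h => h.1 rfl⟩

open scoped Classical in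
/-- The parity-based map `σ`. -/
noncomputable def sigmaFun (n : ℕ) (a b c d : ZMod n) (v : Fin 3 × ZMod n) :
    Fin 3 × ZMod n :=
  if Even v.2 then
    if v.1 = 0 then (1, v.2) else if v.1 = 1 then (2, v.2 + c) else (0, v.2)
  else
    if v.1 = 0 then (2, v.2 - a + d)
    else if v.1 = 1 then (0, v.2 + a + b)
    else (1, v.2 - b + c - d)

namespace ZMod

variable {n : ℕ}

theorem even_intCast_iff (hn : Even n) (k : ℤ) : Even (k : ZMod n) ↔ Even k := by
  refine ⟨fun ⟨r, hr⟩ => ?_, Even.intCast⟩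
  rw [← intCast_eq_zero_iff_even, ← map_intCast (castHom hn.two_dvd (ZMod 2)), hr, map_add,
    CharTwo.add_self_eq_zero]

theorem even_add (hn : Even n) (x y : ZMod n) : Even (x + y) ↔ (Even x ↔ Even y) := by
  obtain ⟨k, rfl⟩ := intCast_surjective x
  obtain ⟨m, rfl⟩ := intCast_surjective y
  rw [← Int.cast_add, even_intCast_iff hn, even_intCast_iff hn, even_intCast_iff hn, Int.even_add]

theorem even_sub (hn : Even n) (x y : ZMod n) : Even (x - y) ↔ (Even x ↔ Even y) := by
  rw [sub_eq_add_neg, even_add hn, even_neg]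

theorem not_even_of_odd (hn : Even n) {x : ZMod n} (hx : Odd x) : ¬Even x := by
  obtain ⟨r, rfl⟩ := hx
  rw [even_add hn, ← Int.cast_one, even_intCast_iff hn]
  simp

end ZMod

namespace SimpleGraph

variable {V : Type*} {G : SimpleGraph V}

theorem Hom.map_adj_iterate (f : G →g G) (m : ℕ) {u v : V} (h : G.Adj u v) :
    G.Adj (f^[m] u) (f^[m] v) := by
  induction m with
  | zero => exact h
  | succ m ih =>
    rw [Function.iterate_succ_apply', Function.iterate_succ_apply']
    exact f.map_adj ih

noncomputable def Iso.ofIterateEq (f : G →g G) {k : ℕ} (hk : k ≠ 0) (φ : G ≃g G)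
    (h : f^[k] = φ) : G ≃g G where
  toEquiv := Equiv.ofBijective f <| by
    obtain ⟨m, rfl⟩ := Nat.exists_eq_succ_of_ne_zero hk
    refine ⟨Function.Injective.of_comp (f := f^[m]) ?_, Function.Surjective.of_comp (g := f^[m]) ?_⟩
    · rw [← Function.iterate_succ, h]
      exact φ.injective
    · rw [← Function.iterate_succ', h]
      exact φ.surjective
  map_rel_iff' {u v} := by
    refine ⟨fun huv => ?_, f.map_adj⟩
    obtain ⟨m, rfl⟩ := Nat.exists_eq_succ_of_ne_zero hk
    have : G.Adj (f^[m] (f u)) (f^[m] (f v)) := f.map_adj_iterate m huv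
    rwa [← Function.iterate_succ_apply, ← Function.iterate_succ_apply, h, φ.map_adj_iff] at this

end SimpleGraph

namespace WH

variable {n : ℕ} {a b c d : ZMod n} {i j : ZMod n}

theorem adj_translate (k : ZMod n) {u v : Fin 3 × ZMod n} :
    (WH n a b c d).Adj (u.1, u.2 + k) (v.1, v.2 + k) ↔ (WH n a b c d).Adj u v := by
  simp only [WH, WHRel, ne_eq, Prod.ext_iff, add_left_inj, add_right_comm _ k,
    add_sub_right_comm _ k]

def translate (k : ZMod n) : WH n a b c d ≃g WH n a b c d where
  toEquiv := (Equiv.refl _).prodCongr (Equiv.addRight k)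
  map_rel_iff' := adj_translate k

theorem adj_A_A (ha : a ≠ 0) (h : j = i + a ∨ j = i - a) : (WH n a b c d).Adj (0, i) (0, j) := by
  refine ⟨fun hij => ha ?_, Or.inl (Or.inl ⟨rfl, rfl, h⟩)⟩
  have : i = j := congrArg Prod.snd hij
  rcases h with rfl | rfl
  · linear_combination -this
  · linear_combination this

theorem adj_A_B (h : j = i) : (WH n a b c d).Adj (0, i) (1, j) :=
  ⟨by simp [Prod.ext_iff], Or.inl (Or.inr (Or.inl ⟨rfl, rfl, h⟩))⟩

theorem adj_A_C (h : j = i) : (WH n a b c d).Adj (0, i) (2, j) :=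
  ⟨by simp [Prod.ext_iff], Or.inl (Or.inr (Or.inr (Or.inl ⟨rfl, rfl, h⟩)))⟩

theorem adj_B_C (h : j = i + b ∨ j = i + c ∨ j = i + d) : (WH n a b c d).Adj (1, i) (2, j) :=
  ⟨by simp [Prod.ext_iff], Or.inl (Or.inr (Or.inr (Or.inr ⟨rfl, rfl, h⟩)))⟩

end WH

section Sigma

variable {n : ℕ} {a b c d : ZMod n} {i : ZMod n}

theorem sigmaFun_zero_of_even (hi : Even i) : sigmaFun n a b c d (0, i) = (1, i) := by
  simp [sigmaFun, hi]

theorem sigmaFun_one_of_even (hi : Even i) : sigmaFun n a b c d (1, i) = (2, i + c) := by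
  simp [sigmaFun, hi]

theorem sigmaFun_two_of_even (hi : Even i) : sigmaFun n a b c d (2, i) = (0, i) := by
  simp [sigmaFun, hi]

theorem sigmaFun_zero_of_not_even (hi : ¬Even i) :
    sigmaFun n a b c d (0, i) = (2, i - a + d) := by
  simp [sigmaFun, hi]

theorem sigmaFun_one_of_not_even (hi : ¬Even i) :
    sigmaFun n a b c d (1, i) = (0, i + a + b) := by
  simp [sigmaFun, hi]

theorem sigmaFun_two_of_not_even (hi : ¬Even i) :
    sigmaFun n a b c d (2, i) = (1, i - b + c - d) := by
  simp [sigmaFun, hi]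

theorem sigmaFun_iterate_three (hn : Even n) (ha : Odd a) (hb : Odd b) (hc : Even c)
    (hd : Odd d) (v : Fin 3 × ZMod n) : (sigmaFun n a b c d)^[3] v = (v.1, v.2 + c) := by
  obtain ⟨t, i⟩ := v
  have ha' := ZMod.not_even_of_odd hn ha
  have hb' := ZMod.not_even_of_odd hn hb
  have hd' := ZMod.not_even_of_odd hn hd
  by_cases hi : Even i <;> fin_cases t <;>
    simp only [Fin.zero_eta, Fin.mk_one, Fin.reduceFinMk, Fin.isValue, Function.iterate_succ,
      Function.iterate_zero, Function.id_comp, Function.comp_apply, Prod.mk.injEq, true_and,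
      hi, ha', hb', hc, hd', ZMod.even_add hn, ZMod.even_sub hn, iff_false, not_true_eq_false,
      not_false_eq_true, sigmaFun_zero_of_even, sigmaFun_one_of_even, sigmaFun_two_of_even,
      sigmaFun_zero_of_not_even, sigmaFun_one_of_not_even, sigmaFun_two_of_not_even] <;>
    ring

theorem sigmaFun_map_rel_of_even (hn : Even n) (ha : Odd a) (hb : Odd b) (hc : Even c)
    (hd : Odd d) (hdab : d = 2 * a + b) (hi : Even i) {t : Fin 3} {v : Fin 3 × ZMod n}
    (h : WHRel n a b c d (t, i) v) :
    (WH n a b c d).Adj (sigmaFun n a b c d (t, i)) (sigmaFun n a b c d v) := by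
  obtain ⟨s, j⟩ := v
  have ha' := ZMod.not_even_of_odd hn ha
  have hb' := ZMod.not_even_of_odd hn hb
  have hd' := ZMod.not_even_of_odd hn hd
  rcases h with ⟨ht, hs, hj | hj⟩ | ⟨ht, hs, hj⟩ | ⟨ht, hs, hj⟩ | ⟨ht, hs, hj | hj | hj⟩ <;>
    dsimp only at ht hs hj <;> subst ht hs j <;>
    simp only [Fin.isValue, hi, ha', hb', hc, hd', ZMod.even_add hn, ZMod.even_sub hn, iff_false,
      not_true_eq_false, not_false_eq_true, add_sub_cancel_right, sigmaFun_zero_of_even,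
      sigmaFun_one_of_even, sigmaFun_two_of_even, sigmaFun_zero_of_not_even,
      sigmaFun_two_of_not_even]
  · exact WH.adj_B_C (Or.inr (Or.inr rfl))
  · exact WH.adj_B_C (Or.inl (by linear_combination hdab))
  · exact WH.adj_B_C (Or.inr (Or.inl rfl))
  · exact (WH.adj_A_B rfl).symm
  · exact (WH.adj_B_C (Or.inr (Or.inr (by ring)))).symm
  · exact (WH.adj_A_C rfl).symm
  · exact (WH.adj_B_C (Or.inl (by ring))).symm

theorem sigmaFun_map_rel_of_not_even (hn : Even n) (ha : Odd a) (hb : Odd b) (hc : Even c)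
    (hd : Odd d) (hdab : d = 2 * a + b) (hcab : 2 * c = 3 * a + 3 * b) (hi : ¬Even i)
    {t : Fin 3} {v : Fin 3 × ZMod n} (h : WHRel n a b c d (t, i) v) :
    (WH n a b c d).Adj (sigmaFun n a b c d (t, i)) (sigmaFun n a b c d v) := by
  obtain ⟨s, j⟩ := v
  have ha' := ZMod.not_even_of_odd hn ha
  have hb' := ZMod.not_even_of_odd hn hb
  have hd' := ZMod.not_even_of_odd hn hd
  have ha0 : a ≠ 0 := by
    rintro rfl
    exact ha' Even.zero
  rcases h with ⟨ht, hs, hj | hj⟩ | ⟨ht, hs, hj⟩ | ⟨ht, hs, hj⟩ | ⟨ht, hs, hj | hj | hj⟩ <;>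
    dsimp only at ht hs hj <;> subst ht hs j <;>
    simp only [Fin.isValue, hi, ha', hb', hc, hd', ZMod.even_add hn, ZMod.even_sub hn, iff_true,
      not_false_eq_true, sigmaFun_zero_of_even, sigmaFun_two_of_even, sigmaFun_zero_of_not_even,
      sigmaFun_one_of_not_even, sigmaFun_two_of_not_even]
  · exact (WH.adj_B_C (Or.inl (by linear_combination hdab))).symm
  · exact (WH.adj_B_C (Or.inr (Or.inr (by ring)))).symm
  · exact (WH.adj_A_C (by linear_combination hdab)).symm
  · exact (WH.adj_B_C (Or.inr (Or.inl (by linear_combination 2 * hdab - hcab)))).symm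
  · exact WH.adj_A_A ha0 (Or.inr (by ring))
  · exact WH.adj_A_B (by linear_combination hcab - hdab)
  · exact WH.adj_A_A ha0 (Or.inl (by linear_combination hdab))

theorem sigmaFun_map_rel (hn : Even n) (ha : Odd a) (hb : Odd b) (hc : Even c) (hd : Odd d)
    (hdab : d = 2 * a + b) (hcab : 2 * c = 3 * a + 3 * b) {u v : Fin 3 × ZMod n}
    (h : WHRel n a b c d u v) :
    (WH n a b c d).Adj (sigmaFun n a b c d u) (sigmaFun n a b c d v) := by
  obtain ⟨t, i⟩ := u
  by_cases hi : Even i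
  · exact sigmaFun_map_rel_of_even hn ha hb hc hd hdab hi h
  · exact sigmaFun_map_rel_of_not_even hn ha hb hc hd hdab hcab hi h

noncomputable def sigmaHom (hn : Even n) (ha : Odd a) (hb : Odd b) (hc : Even c) (hd : Odd d)
    (hdab : d = 2 * a + b) (hcab : 2 * c = 3 * a + 3 * b) : WH n a b c d →g WH n a b c d where
  toFun := sigmaFun n a b c d
  map_rel' h := h.2.elim (sigmaFun_map_rel hn ha hb hc hd hdab hcab)
    fun h' => (sigmaFun_map_rel hn ha hb hc hd hdab hcab h').symm

end Sigma

theorem sigma_is_automorphism_general (n : ℕ) (hneven : Even n) (a b c d : ZMod n)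
    (haodd : Odd a) (hbodd : Odd b) (hdodd : Odd d) (hceven : Even c)
    (hd : d = 2 * a + b) (h2c : 2 * c = 3 * a + 3 * b) :
    ∃ e : WH n a b c d ≃g WH n a b c d,
      ∀ v : Fin 3 × ZMod n, e v = sigmaFun n a b c d v :=
  ⟨.ofIterateEq (sigmaHom hneven haodd hbodd hceven hdodd hd h2c) three_ne_zero (WH.translate c)
    (funext (sigmaFun_iterate_three hneven haodd hbodd hceven hdodd)), fun _ => rfl⟩

theorem sigma_is_automorphism (n : ℕ) (hn : 4 ≤ n) (hneven : Even n) (a b c d : ZMod n)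
    (hbc : b ≠ c) (hbd : b ≠ d) (hcd : c ≠ d)
    (haodd : Odd a) (hbodd : Odd b) (hdodd : Odd d) (hceven : Even c)
    (hd : d = 2 * a + b) (h2c : 2 * c = 3 * a + 3 * b) :
    ∃ e : WH n a b c d ≃g WH n a b c d,
      ∀ v : Fin 3 × ZMod n, e v = sigmaFun n a b c d v :=
  sigma_is_automorphism_general n hneven a b c d haodd hbodd hdodd hceven hd h2c
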